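/- Define F(w) := (1/2)·exp( β·w₁ − α·‖w‖₂² + σ_w²/2 )·erfc( (σ_w + a_w)/√2 ) + (1/2)·exp( −β·w₁ + σ_w²/2 )·erfc( (σ_w − a_w)/√2 ) on {w : σ_w > 0} (F agrees with the population RCAD surrogate M_D on the set where α·‖w‖₂² ≥ γ). Then at every w = (w₁,w₂) with ‖w‖₂ = 1 and σ_w > 0, the partial derivative ∂F/∂w₁ equals (1/2)·exp( β·w₁ + σ_w²/2 − α )·[ (β − 2α·w₁ + w₁·σ₁²)·erfc( (σ_w + a_w)/√2 ) − √(2/π)·( (β + (γ − β·w₁)·w₁·σ₁²/σ_w² + w₁·σ₁²)/σ_w )·exp( −(σ_w + a_w)²/2 ) ] + (1/2)·exp( −β·w₁ + σ_w²/2 )·[ (−β + w₁·σ₁²)·erfc( (σ_w − a_w)/√2 ) + √(2/π)·( (β + (γ − β·w₁)·w₁·σ₁²/σ_w² − w₁·σ₁²)/σ_w )·exp( −(σ_w − a_w)²/2 ) ]. -/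

import Mathlib

open MeasureTheory ProbabilityTheory Real Filter

noncomputable section

namespace RCAD

/-- The complementary error function `erfc x = (2/√π) ∫_x^∞ e^{-z²} dz`. -/
def erfc (x : ℝ) : ℝ := (2 / Real.sqrt Real.pi) * ∫ z in Set.Ioi x, Real.exp (-z ^ 2)

/-- The inverse of `erfc` (on `(0,2)`). -/
def erfcInv : ℝ → ℝ := Function.invFun erfc

/-- Parameter/input space `ℝ × ℝ^d` (true feature coordinate, noisy coordinates). -/
abbrev Vec (d : ℕ) := ℝ × (Fin d → ℝ)

variable {d : ℕ}

/-- Inner product `⟨w, x⟩ = w₁ x₁ + ⟨w₂, x₂⟩` on `ℝ × ℝ^d`. -/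
def ip (w x : Vec d) : ℝ := w.1 * x.1 + ∑ i, w.2 i * x.2 i

/-- Euclidean norm on `ℝ × ℝ^d`. -/
def norm2 (w : Vec d) : ℝ := Real.sqrt (w.1 ^ 2 + ∑ i, w.2 i ^ 2)

/-- Euclidean norm on `ℝ^d`. -/
def enorm (v : Fin d → ℝ) : ℝ := Real.sqrt (∑ i, v i ^ 2)

/-- The quadratic form `wᵀ Σ̃ w` of the block-diagonal matrix `Σ̃ = diag(σ₁², Σ₂)`. -/
def quadForm (σ₁ : ℝ) (Cov : Matrix (Fin d) (Fin d) ℝ) (w : Vec d) : ℝ :=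
  σ₁ ^ 2 * w.1 ^ 2 + ∑ i, ∑ j, w.2 i * Cov i j * w.2 j

/-- `σ_w = √(wᵀ Σ̃ w)`. -/
def sigw (σ₁ : ℝ) (Cov : Matrix (Fin d) (Fin d) ℝ) (w : Vec d) : ℝ :=
  Real.sqrt (quadForm σ₁ Cov w)

/-- The trace of `Σ̃ = diag(σ₁², Σ₂)`. -/
def traceTilde (σ₁ : ℝ) (Cov : Matrix (Fin d) (Fin d) ℝ) : ℝ := σ₁ ^ 2 + Cov.trace

/-- The operator norm of the symmetric positive matrix `Σ̃`, characterized variationally as the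
maximum of the quadratic form on the unit sphere. -/
def opNorm (σ₁ : ℝ) (Cov : Matrix (Fin d) (Fin d) ℝ) : ℝ :=
  ⨆ w : {w : Vec d // norm2 w = 1}, quadForm σ₁ Cov w

/-- The smallest eigenvalue of `Σ̃`, characterized variationally as the
minimum of the quadratic form on the unit sphere. -/
def lamMin (σ₁ : ℝ) (Cov : Matrix (Fin d) (Fin d) ℝ) : ℝ :=
  ⨅ w : {w : Vec d // norm2 w = 1}, quadForm σ₁ Cov w

/-- Standard Gaussian measure on `ℝ^k`. -/
def stdGaussian (k : ℕ) : Measure (Fin k → ℝ) :=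
  Measure.pi fun _ => gaussianReal 0 1

/-- Base randomness: a uniform sign bit, a standard Gaussian for the first coordinate, and a
standard Gaussian vector for the noisy coordinates. -/
def baseMeasure (d : ℕ) : Measure (Bool × (ℝ × (Fin d → ℝ))) :=
  ((PMF.uniformOfFintype Bool).toMeasure).prod ((gaussianReal 0 1).prod (stdGaussian d))

/-- sign of a boolean, as `±1`. -/
def sgn (b : Bool) : ℝ := if b then 1 else -1

/-- The positive semidefinite square root, as `Matrix.PosSemidef.sqrt` was defined in Mathlib
(Dec 2024); that declaration no longer exists. -/
def psdSqrt {n : Type*} [Fintype n] [DecidableEq n] {A : Matrix n n ℝ} (hA : A.PosSemidef) :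
    Matrix n n ℝ :=
  hA.1.eigenvectorUnitary.1 * Matrix.diagonal ((↑) ∘ (√·) ∘ hA.1.eigenvalues) *
    (star hA.1.eigenvectorUnitary : Matrix n n ℝ)

/-- Generator of one sample `(x, y)` from `D`: `y` uniform on `{-1,1}`,
`x₁ ~ N(β y, σ₁²)`, `x₂ ~ N(0, Σ₂)` (realized as `Σ₂^{1/2}` applied to a standard Gaussian). -/
def gen (β σ₁ : ℝ) (Cov : Matrix (Fin d) (Fin d) ℝ) (hCov : Cov.PosDef)
    (p : Bool × (ℝ × (Fin d → ℝ))) : Vec d × ℝ :=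
  ((β * sgn p.1 + σ₁ * p.2.1, Matrix.mulVec (psdSqrt hCov.posSemidef) p.2.2), sgn p.1)

/-- The data distribution `D` on `(x, y) ∈ (ℝ × ℝ^d) × {-1,1}`. -/
def Dist (β σ₁ : ℝ) (Cov : Matrix (Fin d) (Fin d) ℝ) (hCov : Cov.PosDef) :
    Measure (Vec d × ℝ) :=
  Measure.map (gen β σ₁ Cov hCov) (baseMeasure d)

/-- The i.i.d. `n`-fold sample distribution `D^n`. -/
def sampleDist (β σ₁ : ℝ) (Cov : Matrix (Fin d) (Fin d) ℝ) (hCov : Cov.PosDef) (n : ℕ) :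
    Measure (Fin n → Vec d × ℝ) :=
  Measure.map (fun Z : Fin n → Bool × (ℝ × (Fin d → ℝ)) => fun i => gen β σ₁ Cov hCov (Z i))
    (Measure.pi fun _ => baseMeasure d)

/-- Population 0-1 error of the linear classifier `x ↦ sign⟨w,x⟩`. -/
def popErr (β σ₁ : ℝ) (Cov : Matrix (Fin d) (Fin d) ℝ) (hCov : Cov.PosDef) (w : Vec d) : ℝ :=
  (Dist β σ₁ Cov hCov {p | p.2 * ip w p.1 < 0}).toReal

/-- Empirical margin-`γ` error `(1/n) #{i : yᵢ ⟨w,xᵢ⟩ < γ}`. -/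
def empMarginErr {n : ℕ} (γ : ℝ) (S : Fin n → Vec d × ℝ) (w : Vec d) : ℝ :=
  (∑ i, if (S i).2 * ip w (S i).1 < γ then (1 : ℝ) else 0) / n

/-- The gradient convention `∇ₓ l_γ(w;(x,y)) = -y·w` if `y⟨w,x⟩ < γ`, else `0`. -/
def lossGrad (γ : ℝ) (w : Vec d) (x : Vec d) (y : ℝ) : Vec d :=
  if y * ip w x < γ then (-y) • w else 0

/-- Population RCAD surrogate `M_D(w) = E[exp(-|⟨w, x + α ∇ₓ l_γ(w;(x,y))⟩|)]`. -/
def MD (β σ₁ : ℝ) (Cov : Matrix (Fin d) (Fin d) ℝ) (hCov : Cov.PosDef) (γ α : ℝ)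
    (w : Vec d) : ℝ :=
  ∫ p, Real.exp (-|ip w (p.1 + α • lossGrad γ w p.1 p.2)|) ∂(Dist β σ₁ Cov hCov)

/-- Empirical RCAD surrogate over a sample. -/
def MDhat {n : ℕ} (γ α : ℝ) (S : Fin n → Vec d × ℝ) (w : Vec d) : ℝ :=
  (∑ i, Real.exp (-|ip w ((S i).1 + α • lossGrad γ w (S i).1 (S i).2)|)) / n

/-- `a_w = (β w₁ - γ)/σ_w`. -/
def aw (β σ₁ γ : ℝ) (Cov : Matrix (Fin d) (Fin d) ℝ) (w : Vec d) : ℝ :=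
  (β * w.1 - γ) / sigw σ₁ Cov w

/-- Partial derivative of a function on `ℝ × ℝ^d` in the first coordinate. -/
def dw1 (F : Vec d → ℝ) (w : Vec d) : ℝ := deriv (fun t => F (t, w.2)) w.1

/-- Gradient of a function on `ℝ × ℝ^d` in the last `d` coordinates. -/
def gradw2 (F : Vec d → ℝ) (w : Vec d) : Fin d → ℝ :=
  fun i => fderiv ℝ (fun v : Fin d → ℝ => F (w.1, v)) w.2 (Pi.single i 1)

/-- Full gradient of a function on `ℝ × ℝ^d`. -/
def grad (F : Vec d → ℝ) (w : Vec d) : Vec d := (dw1 F w, gradw2 F w)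



lemma integrable_gauss' : MeasureTheory.Integrable fun z : ℝ => Real.exp (-z ^ 2) := by
  simpa using integrable_exp_neg_mul_sq (one_pos)

lemma hasDerivAt_integral_Ioi_gauss (x : ℝ) :
    HasDerivAt (fun y => ∫ z in Set.Ioi y, Real.exp (-z ^ 2)) (-Real.exp (-x ^ 2)) x := by
  have hint := integrable_gauss'
  have key : ∀ y : ℝ, ∫ z in Set.Ioi y, Real.exp (-z ^ 2)
      = (∫ z : ℝ, Real.exp (-z ^ 2)) - (∫ z in Set.Iic (0:ℝ), Real.exp (-z ^ 2))
        - ∫ z in (0:ℝ)..y, Real.exp (-z ^ 2) := by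
    intro y
    have h1 : (∫ z in Set.Iic y, Real.exp (-z ^ 2)) + ∫ z in Set.Ioi y, Real.exp (-z ^ 2)
        = ∫ z : ℝ, Real.exp (-z ^ 2) :=
      intervalIntegral.integral_Iic_add_Ioi hint.integrableOn hint.integrableOn
    have h2 := intervalIntegral.integral_Iic_sub_Iic
      (f := fun z : ℝ => Real.exp (-z ^ 2)) (μ := volume) (a := (0:ℝ)) (b := y)
      hint.integrableOn hint.integrableOn
    linarith [h1, h2]
  have hft : HasDerivAt (fun y => ∫ z in (0:ℝ)..y, Real.exp (-z ^ 2)) (Real.exp (-x ^ 2)) x := by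
    refine intervalIntegral.integral_hasDerivAt_right hint.intervalIntegrable ?_ ?_
    · exact (Continuous.stronglyMeasurable (by continuity)).stronglyMeasurableAtFilter
    · exact (Real.continuous_exp.comp (by continuity)).continuousAt
  have hmain : HasDerivAt (fun y => ((∫ z : ℝ, Real.exp (-z ^ 2))
      - ∫ z in Set.Iic (0:ℝ), Real.exp (-z ^ 2)) - ∫ z in (0:ℝ)..y, Real.exp (-z ^ 2))
      (0 - Real.exp (-x ^ 2)) x :=
    (hasDerivAt_const x _).sub hft
  have heq : (fun y => ∫ z in Set.Ioi y, Real.exp (-z ^ 2)) = fun y =>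
      ((∫ z : ℝ, Real.exp (-z ^ 2)) - ∫ z in Set.Iic (0:ℝ), Real.exp (-z ^ 2))
        - ∫ z in (0:ℝ)..y, Real.exp (-z ^ 2) := funext key
  rw [heq]
  simpa using hmain

lemma erfc_hasDerivAt (x : ℝ) :
    HasDerivAt erfc (-(2 / Real.sqrt Real.pi * Real.exp (-x ^ 2))) x := by
  have := (hasDerivAt_integral_Ioi_gauss x).const_mul (2 / Real.sqrt Real.pi)
  rw [show erfc = fun y => (2 / Real.sqrt Real.pi) * ∫ z in Set.Ioi y, Real.exp (-z ^ 2) from rfl]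
  exact this.congr_deriv (by ring)

set_option maxHeartbeats 2000000

/-- the partial derivative in `w₁` of the closed-form extension
`F(w) = (1/2) e^{β w₁ - α‖w‖² + σ_w²/2} erfc((σ_w + a_w)/√2)
      + (1/2) e^{-β w₁ + σ_w²/2} erfc((σ_w - a_w)/√2)`
at any unit-norm `w` with `σ_w > 0` equals the stated expression. -/
theorem dF_dw1_formula (d : ℕ) (hd : 1 ≤ d) (β σ₁ : ℝ) (hβ : 0 < β) (hσ₁ : 0 < σ₁)
    (Cov : Matrix (Fin d) (Fin d) ℝ) (hCov : Cov.PosDef)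
    (γ α : ℝ) (hγ : 0 < γ) (hα : 0 < α)
    (w : Vec d) (hw : norm2 w = 1) (hσw : 0 < sigw σ₁ Cov w) :
    dw1 (fun v : Vec d =>
        (1 / 2) * Real.exp (β * v.1 - α * norm2 v ^ 2 + sigw σ₁ Cov v ^ 2 / 2)
            * erfc ((sigw σ₁ Cov v + aw β σ₁ γ Cov v) / Real.sqrt 2)
          + (1 / 2) * Real.exp (-(β * v.1) + sigw σ₁ Cov v ^ 2 / 2)
            * erfc ((sigw σ₁ Cov v - aw β σ₁ γ Cov v) / Real.sqrt 2)) w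
    = (1 / 2) * Real.exp (β * w.1 + sigw σ₁ Cov w ^ 2 / 2 - α) *
        ((β - 2 * α * w.1 + w.1 * σ₁ ^ 2)
            * erfc ((sigw σ₁ Cov w + aw β σ₁ γ Cov w) / Real.sqrt 2)
          - Real.sqrt (2 / Real.pi)
            * ((β + (γ - β * w.1) * w.1 * σ₁ ^ 2 / sigw σ₁ Cov w ^ 2 + w.1 * σ₁ ^ 2)
                / sigw σ₁ Cov w)
            * Real.exp (-(sigw σ₁ Cov w + aw β σ₁ γ Cov w) ^ 2 / 2))
      + (1 / 2) * Real.exp (-(β * w.1) + sigw σ₁ Cov w ^ 2 / 2) *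
        ((-β + w.1 * σ₁ ^ 2)
            * erfc ((sigw σ₁ Cov w - aw β σ₁ γ Cov w) / Real.sqrt 2)
          + Real.sqrt (2 / Real.pi)
            * ((β + (γ - β * w.1) * w.1 * σ₁ ^ 2 / sigw σ₁ Cov w ^ 2 - w.1 * σ₁ ^ 2)
                / sigw σ₁ Cov w)
            * Real.exp (-(sigw σ₁ Cov w - aw β σ₁ γ Cov w) ^ 2 / 2)) := by
  classical
  obtain ⟨x, v⟩ := w
  simp only at *
  set c : ℝ := σ₁ ^ 2 with hc_def
  set Q2 : ℝ := ∑ i, ∑ j, v i * Cov i j * v j with hQ2_def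
  set S : ℝ := ∑ i, v i ^ 2 with hS_def
  have hQ2 : 0 ≤ Q2 := by
    have h := hCov.posSemidef.dotProduct_mulVec_nonneg v
    have : dotProduct (star v) (Cov.mulVec v) = Q2 := by
      simp only [dotProduct, Matrix.mulVec, star_trivial, hQ2_def]
      exact Finset.sum_congr rfl fun i _ => by
        rw [Finset.mul_sum]
        exact Finset.sum_congr rfl fun j _ => by ring
    rw [this] at h
    exact h
  have hSnn : 0 ≤ S := Finset.sum_nonneg fun i _ => sq_nonneg _
  have hqf : ∀ t : ℝ, quadForm σ₁ Cov (t, v) = c * t ^ 2 + Q2 := fun t => rfl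
  have hqnn : ∀ t : ℝ, 0 ≤ c * t ^ 2 + Q2 := fun t => by positivity
  have hsig : ∀ t : ℝ, sigw σ₁ Cov (t, v) = Real.sqrt (c * t ^ 2 + Q2) := fun t => rfl
  have hqpos : 0 < c * x ^ 2 + Q2 := by
    have := hσw
    rw [sigw, hqf] at this
    exact (Real.sqrt_pos.mp this)
  set s : ℝ := Real.sqrt (c * x ^ 2 + Q2) with hs_def
  have hspos : 0 < s := Real.sqrt_pos.mpr hqpos
  have hsne : s ≠ 0 := ne_of_gt hspos
  have hs2 : s ^ 2 = c * x ^ 2 + Q2 := Real.sq_sqrt (le_of_lt hqpos)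
  have hn1 : x ^ 2 + S = 1 := by
    have : Real.sqrt (x ^ 2 + S) = 1 := hw
    nlinarith [Real.sq_sqrt (by positivity : (0:ℝ) ≤ x ^ 2 + S)]
  -- rewrite the function
  have hFeq : (fun t : ℝ =>
      (1 / 2) * Real.exp (β * t - α * norm2 (t, v) ^ 2 + sigw σ₁ Cov (t, v) ^ 2 / 2)
          * erfc ((sigw σ₁ Cov (t, v) + aw β σ₁ γ Cov (t, v)) / Real.sqrt 2)
        + (1 / 2) * Real.exp (-(β * t) + sigw σ₁ Cov (t, v) ^ 2 / 2)
          * erfc ((sigw σ₁ Cov (t, v) - aw β σ₁ γ Cov (t, v)) / Real.sqrt 2))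
      = (fun t : ℝ =>
      (1 / 2) * Real.exp (β * t - α * (t ^ 2 + S) + (c * t ^ 2 + Q2) / 2)
          * erfc ((Real.sqrt (c * t ^ 2 + Q2)
              + (β * t - γ) / Real.sqrt (c * t ^ 2 + Q2)) / Real.sqrt 2)
        + (1 / 2) * Real.exp (-(β * t) + (c * t ^ 2 + Q2) / 2)
          * erfc ((Real.sqrt (c * t ^ 2 + Q2)
              - (β * t - γ) / Real.sqrt (c * t ^ 2 + Q2)) / Real.sqrt 2)) := by
    funext t
    have h1 : norm2 (t, v) ^ 2 = t ^ 2 + S := Real.sq_sqrt (by positivity)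
    have h2 : sigw σ₁ Cov (t, v) ^ 2 = c * t ^ 2 + Q2 := by
      rw [hsig t]; exact Real.sq_sqrt (hqnn t)
    have h3 : aw β σ₁ γ Cov (t, v) = (β * t - γ) / Real.sqrt (c * t ^ 2 + Q2) := rfl
    rw [h1, h2, h3, hsig t]
  -- derivatives
  have hq' : HasDerivAt (fun t : ℝ => c * t ^ 2 + Q2) (2 * c * x) x := by
    have := ((hasDerivAt_pow 2 x).const_mul c).add_const Q2
    refine this.congr_deriv ?_
    push_cast
    ring
  have hσd : HasDerivAt (fun t : ℝ => Real.sqrt (c * t ^ 2 + Q2)) (c * x / s) x := by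
    have := (Real.hasDerivAt_sqrt (ne_of_gt hqpos)).comp x hq'
    refine this.congr_deriv ?_
    rw [← hs_def]
    field_simp
  set A' : ℝ := (β * s - (β * x - γ) * (c * x / s)) / s ^ 2 with hA'_def
  have had : HasDerivAt (fun t : ℝ => (β * t - γ) / Real.sqrt (c * t ^ 2 + Q2)) A' x := by
    have hnum : HasDerivAt (fun t : ℝ => β * t - γ) β x := by
      simpa using ((hasDerivAt_id x).const_mul β).sub_const γ
    exact hnum.div hσd hsne
  set g1 : ℝ := (s + (β * x - γ) / s) / Real.sqrt 2 with hg1_def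
  set g2 : ℝ := (s - (β * x - γ) / s) / Real.sqrt 2 with hg2_def
  set d1 : ℝ := (c * x / s + A') / Real.sqrt 2 with hd1_def
  set d2 : ℝ := (c * x / s - A') / Real.sqrt 2 with hd2_def
  have herf1 : HasDerivAt (fun t : ℝ => erfc ((Real.sqrt (c * t ^ 2 + Q2)
      + (β * t - γ) / Real.sqrt (c * t ^ 2 + Q2)) / Real.sqrt 2))
      (-(2 / Real.sqrt Real.pi * Real.exp (-g1 ^ 2)) * d1) x := by
    have hin : HasDerivAt (fun t : ℝ => (Real.sqrt (c * t ^ 2 + Q2)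
        + (β * t - γ) / Real.sqrt (c * t ^ 2 + Q2)) / Real.sqrt 2) d1 x :=
      (hσd.add had).div_const _
    have := (erfc_hasDerivAt g1).comp x hin
    exact this
  have herf2 : HasDerivAt (fun t : ℝ => erfc ((Real.sqrt (c * t ^ 2 + Q2)
      - (β * t - γ) / Real.sqrt (c * t ^ 2 + Q2)) / Real.sqrt 2))
      (-(2 / Real.sqrt Real.pi * Real.exp (-g2 ^ 2)) * d2) x := by
    have hin : HasDerivAt (fun t : ℝ => (Real.sqrt (c * t ^ 2 + Q2)
        - (β * t - γ) / Real.sqrt (c * t ^ 2 + Q2)) / Real.sqrt 2) d2 x :=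
      (hσd.sub had).div_const _
    have := (erfc_hasDerivAt g2).comp x hin
    exact this
  set E1 : ℝ := Real.exp (β * x - α * (x ^ 2 + S) + (c * x ^ 2 + Q2) / 2) with hE1_def
  set E2 : ℝ := Real.exp (-(β * x) + (c * x ^ 2 + Q2) / 2) with hE2_def
  have hE1d : HasDerivAt (fun t : ℝ => Real.exp (β * t - α * (t ^ 2 + S) + (c * t ^ 2 + Q2) / 2))
      (E1 * (β - 2 * α * x + c * x)) x := by
    have hinner : HasDerivAt (fun t : ℝ => β * t - α * (t ^ 2 + S) + (c * t ^ 2 + Q2) / 2)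
        (β - 2 * α * x + c * x) x := by
      have h1 : HasDerivAt (fun t : ℝ => β * t) β x := by
        simpa using (hasDerivAt_id x).const_mul β
      have h2 : HasDerivAt (fun t : ℝ => α * (t ^ 2 + S)) (2 * α * x) x := by
        have := ((hasDerivAt_pow 2 x).add_const S).const_mul α
        refine this.congr_deriv ?_
        push_cast; ring
      have h3 := hq'.div_const 2
      have := (h1.sub h2).add h3
      refine this.congr_deriv ?_
      ring
    exact hinner.exp
  have hE2d : HasDerivAt (fun t : ℝ => Real.exp (-(β * t) + (c * t ^ 2 + Q2) / 2))
      (E2 * (-β + c * x)) x := by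
    have hinner : HasDerivAt (fun t : ℝ => -(β * t) + (c * t ^ 2 + Q2) / 2)
        (-β + c * x) x := by
      have h1 : HasDerivAt (fun t : ℝ => -(β * t)) (-β) x := by
        exact (((hasDerivAt_id x).const_mul β).neg).congr_deriv (by ring)
      have := h1.add (hq'.div_const 2)
      refine this.congr_deriv ?_
      ring
    exact hinner.exp
  have hG : HasDerivAt (fun t : ℝ =>
      (1 / 2) * Real.exp (β * t - α * (t ^ 2 + S) + (c * t ^ 2 + Q2) / 2)
          * erfc ((Real.sqrt (c * t ^ 2 + Q2)
              + (β * t - γ) / Real.sqrt (c * t ^ 2 + Q2)) / Real.sqrt 2)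
        + (1 / 2) * Real.exp (-(β * t) + (c * t ^ 2 + Q2) / 2)
          * erfc ((Real.sqrt (c * t ^ 2 + Q2)
              - (β * t - γ) / Real.sqrt (c * t ^ 2 + Q2)) / Real.sqrt 2))
      ((1 / 2 * (E1 * (β - 2 * α * x + c * x))) * erfc g1
        + (1 / 2 * E1) * (-(2 / Real.sqrt Real.pi * Real.exp (-g1 ^ 2)) * d1)
        + ((1 / 2 * (E2 * (-β + c * x))) * erfc g2
        + (1 / 2 * E2) * (-(2 / Real.sqrt Real.pi * Real.exp (-g2 ^ 2)) * d2))) x := by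
    exact ((hE1d.const_mul (1/2)).mul herf1).add ((hE2d.const_mul (1/2)).mul herf2)
  have hderiv : dw1 (fun v_1 : Vec d =>
      (1 / 2) * Real.exp (β * v_1.1 - α * norm2 v_1 ^ 2 + sigw σ₁ Cov v_1 ^ 2 / 2)
          * erfc ((sigw σ₁ Cov v_1 + aw β σ₁ γ Cov v_1) / Real.sqrt 2)
        + (1 / 2) * Real.exp (-(β * v_1.1) + sigw σ₁ Cov v_1 ^ 2 / 2)
          * erfc ((sigw σ₁ Cov v_1 - aw β σ₁ γ Cov v_1) / Real.sqrt 2)) (x, v)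
      = (1 / 2 * (E1 * (β - 2 * α * x + c * x))) * erfc g1
        + (1 / 2 * E1) * (-(2 / Real.sqrt Real.pi * Real.exp (-g1 ^ 2)) * d1)
        + ((1 / 2 * (E2 * (-β + c * x))) * erfc g2
        + (1 / 2 * E2) * (-(2 / Real.sqrt Real.pi * Real.exp (-g2 ^ 2)) * d2)) := by
    rw [dw1]
    simp only
    rw [hFeq]
    exact hG.deriv
  rw [hderiv]
  -- now the algebraic identification
  have hsigw : sigw σ₁ Cov (x, v) = s := hsig x
  have haw : aw β σ₁ γ Cov (x, v) = (β * x - γ) / s := by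
    rw [aw, hsigw]
  rw [hsigw, haw]
  have hsq2 : Real.sqrt 2 ^ 2 = 2 := Real.sq_sqrt (by norm_num)
  have hsq2ne : Real.sqrt 2 ≠ 0 := by positivity
  have hsqpi : Real.sqrt Real.pi ≠ 0 := by positivity
  have hE1' : E1 = Real.exp (β * x + s ^ 2 / 2 - α) := by
    rw [hE1_def]
    congr 1
    rw [hn1, ← hs2]
    ring
  have hsigsq : s ^ 2 / 2 = (c * x ^ 2 + Q2) / 2 := by rw [hs2]
  have hexp1 : Real.exp (-g1 ^ 2) = Real.exp (-(s + (β * x - γ) / s) ^ 2 / 2) := by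
    congr 1
    rw [hg1_def, div_pow, hsq2]
    ring
  have hexp2 : Real.exp (-g2 ^ 2) = Real.exp (-(s - (β * x - γ) / s) ^ 2 / 2) := by
    congr 1
    rw [hg2_def, div_pow, hsq2]
    ring
  have hsqrt2pi : Real.sqrt (2 / Real.pi) = Real.sqrt 2 / Real.sqrt Real.pi :=
    Real.sqrt_div (by norm_num) _
  have hE2' : E2 = Real.exp (-(β * x) + s ^ 2 / 2) := by
    rw [hE2_def, hs2]
  rw [hE1', hE2', hexp1, hexp2, hg1_def, hg2_def, hsqrt2pi]
  have h2s : (2:ℝ) / Real.sqrt 2 = Real.sqrt 2 := by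
    rw [eq_comm, eq_div_iff hsq2ne]
    exact Real.mul_self_sqrt (by norm_num : (0:ℝ) ≤ 2)
  have hgen : ∀ u : ℝ, 2 / Real.sqrt Real.pi * (u / Real.sqrt 2)
      = Real.sqrt 2 / Real.sqrt Real.pi * u := by
    intro u
    calc 2 / Real.sqrt Real.pi * (u / Real.sqrt 2)
        = (2 / Real.sqrt 2) * (u / Real.sqrt Real.pi) := by ring
      _ = Real.sqrt 2 * (u / Real.sqrt Real.pi) := by rw [h2s]
      _ = Real.sqrt 2 / Real.sqrt Real.pi * u := by ring
  have k1 : 2 / Real.sqrt Real.pi * d1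
      = Real.sqrt 2 / Real.sqrt Real.pi
          * ((β + (γ - β * x) * x * c / s ^ 2 + x * c) / s) := by
    have hdd : c * x / s + A' = (β + (γ - β * x) * x * c / s ^ 2 + x * c) / s := by
      rw [hA'_def]; field_simp; ring
    rw [hd1_def, ← hdd]
    exact hgen _
  have k2 : 2 / Real.sqrt Real.pi * d2
      = -(Real.sqrt 2 / Real.sqrt Real.pi
          * ((β + (γ - β * x) * x * c / s ^ 2 - x * c) / s)) := by
    have hdd : c * x / s - A' = -((β + (γ - β * x) * x * c / s ^ 2 - x * c) / s) := by
      rw [hA'_def]; field_simp; ring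
    rw [hd2_def, hdd]
    rw [hgen]
    ring
  linear_combination (-(1/2) * Real.exp (β * x + s ^ 2 / 2 - α)
      * Real.exp (-(s + (β * x - γ) / s) ^ 2 / 2)) * k1
    + (-(1/2) * Real.exp (-(β * x) + s ^ 2 / 2)
      * Real.exp (-(s - (β * x - γ) / s) ^ 2 / 2)) * k2

end RCAD
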